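/- Let G be a finite simple connected graph of order n ≥ 3 with ℓ pendant vertices and s support vertices, and let δ' be the minimum degree taken over all vertices of G that are not pendant vertices. Then the packing number satisfies ρ(G) ≤ (n − ℓ + δ'·s)/(1 + δ'). -/

import Mathlib

/-!
The closed neighbourhoods of the vertices of a packing are pairwise disjoint. Give every
non-pendant vertex weight 1 and every support vertex an extra weight `δ'`; the total weight is
`n - ℓ + δ' s`. Every closed neighbourhood `N[b]` weighs at least `1 + δ'`: if it contains a
support vertex, that vertex is itself non-pendant (two adjacent pendant vertices would form a
component of order 2); otherwise `b` is neither pendant nor a support vertex, so all of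
`N[b]` consists of non-pendant vertices and `|N[b]| = 1 + deg b ≥ 1 + δ'`.
-/

open SimpleGraph Finset

variable {V : Type*}

/-- The closed neighborhood `N[v]` of a vertex `v`, as a `Finset`. -/
def closedNbrFinset (G : SimpleGraph V) [Fintype V] [DecidableEq V] [DecidableRel G.Adj]
    (v : V) : Finset V :=
  insert v (G.neighborFinset v)

/-- `B` is a packing in `G`: every closed neighborhood meets `B` in at most one vertex. -/
def IsPacking (G : SimpleGraph V) [Fintype V] [DecidableEq V] [DecidableRel G.Adj]
    (B : Finset V) : Prop :=
  ∀ v : V, (closedNbrFinset G v ∩ B).card ≤ 1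

/-- The packing number `ρ(G)`: the maximum cardinality of a packing in `G`. -/
noncomputable def packingNumber (G : SimpleGraph V) [Fintype V] [DecidableEq V]
    [DecidableRel G.Adj] : ℕ :=
  sSup {m | ∃ B : Finset V, IsPacking G B ∧ B.card = m}

section Pendant

variable {G : SimpleGraph V} [Fintype V] [DecidableRel G.Adj]

variable (G) in
def nonpendantFinset : Finset V := {v | G.degree v ≠ 1}

variable (G) in
def supportFinset : Finset V := {v | ∃ u, G.Adj v u ∧ G.degree u = 1}

@[simp]
lemma mem_nonpendantFinset {v : V} : v ∈ nonpendantFinset G ↔ G.degree v ≠ 1 := by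
  simp [nonpendantFinset]

@[simp]
lemma mem_supportFinset {v : V} :
    v ∈ supportFinset G ↔ ∃ u, G.Adj v u ∧ G.degree u = 1 := by
  simp [supportFinset]

lemma SimpleGraph.Connected.degree_ne_one_of_adj_of_degree_eq_one (hconn : G.Connected)
    (hn : 3 ≤ Fintype.card V) {u v : V} (hadj : G.Adj u v) (hu : G.degree u = 1) :
    G.degree v ≠ 1 := by
  classical
  intro hv
  obtain ⟨w, hw⟩ : ∃ w, w ∉ ({u, v} : Finset V) := by
    by_contra! h
    have := card_le_card (fun x _ ↦ h x : univ ⊆ {u, v})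
    have := card_le_two (a := u) (b := v)
    rw [card_univ] at *
    omega
  obtain ⟨p⟩ := hconn.preconnected u w
  obtain ⟨d, -, hd, hd'⟩ := p.exists_boundary_dart {u, v} (by simp) (by simpa using hw)
  have only_nbr : ∀ {x y z}, G.degree x = 1 → G.Adj x y → G.Adj x z → z = y :=
    fun hx hy hz ↦ (degree_eq_one_iff_existsUnique_adj.mp hx).unique hz hy
  rcases hd with hd | hd
  · exact hd' (.inr (only_nbr (hd ▸ hu) hadj (hd ▸ d.adj)))
  · exact hd' (.inl (only_nbr (hd ▸ hv) hadj.symm (hd ▸ d.adj)))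

lemma SimpleGraph.Connected.supportFinset_subset_nonpendantFinset (hconn : G.Connected)
    (hn : 3 ≤ Fintype.card V) : supportFinset G ⊆ nonpendantFinset G := fun v hv ↦ by
  obtain ⟨u, hvu, hu⟩ := mem_supportFinset.mp hv
  exact mem_nonpendantFinset.mpr (hconn.degree_ne_one_of_adj_of_degree_eq_one hn hvu.symm hu)

end Pendant

section Packing

variable {G : SimpleGraph V} [Fintype V] [DecidableEq V] [DecidableRel G.Adj]

lemma mem_closedNbrFinset {v w : V} : w ∈ closedNbrFinset G v ↔ w = v ∨ G.Adj v w := by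
  simp [closedNbrFinset]

lemma card_closedNbrFinset (v : V) : (closedNbrFinset G v).card = 1 + G.degree v := by
  rw [closedNbrFinset, card_insert_of_notMem (by simp), card_neighborFinset_eq_degree, add_comm]

lemma IsPacking.pairwiseDisjoint {B : Finset V} (hB : IsPacking G B) :
    (B : Set V).PairwiseDisjoint (closedNbrFinset G) := by
  intro b₁ h₁ b₂ h₂ hne
  rw [Function.onFun, Finset.disjoint_left]
  intro v hv₁ hv₂
  have mem {b} (hb : b ∈ B) (hv : v ∈ closedNbrFinset G b) :
      b ∈ closedNbrFinset G v ∩ B := by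
    rw [mem_closedNbrFinset] at hv
    exact mem_inter.mpr ⟨mem_closedNbrFinset.mpr (hv.imp Eq.symm Adj.symm), hb⟩
  exact hne (card_le_one.mp (hB v) _ (mem h₁ hv₁) _ (mem h₂ hv₂))

lemma IsPacking.sum_card_inter_le {B : Finset V} (hB : IsPacking G B) (T : Finset V) :
    ∑ b ∈ B, (closedNbrFinset G b ∩ T).card ≤ T.card := by
  rw [← card_biUnion (hB.pairwiseDisjoint.mono_on fun _ _ ↦ inter_subset_left)]
  exact card_le_card (biUnion_subset.mpr fun _ _ ↦ inter_subset_right)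

lemma exists_isPacking_card_eq_packingNumber :
    ∃ B : Finset V, IsPacking G B ∧ B.card = packingNumber G :=
  Nat.sSup_mem (s := {m | ∃ B : Finset V, IsPacking G B ∧ B.card = m})
    ⟨0, ∅, fun v ↦ by simp, rfl⟩
    ⟨Fintype.card V, fun _ ⟨B, _, hB⟩ ↦ hB ▸ card_le_univ B⟩

lemma one_add_le_card_inter_nonpendant_add_mul {δ' : ℕ}
    (hδ' : ∀ v, G.degree v ≠ 1 → δ' ≤ G.degree v)
    (hsupp : supportFinset G ⊆ nonpendantFinset G) (b : V) :
    1 + δ' ≤ (closedNbrFinset G b ∩ nonpendantFinset G).card +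
      δ' * (closedNbrFinset G b ∩ supportFinset G).card := by
  by_cases hS : (closedNbrFinset G b ∩ supportFinset G).Nonempty
  · have hL : (closedNbrFinset G b ∩ nonpendantFinset G).Nonempty :=
      hS.mono (inter_subset_inter_left hsupp)
    exact Nat.add_le_add hL.card_pos (Nat.le_mul_of_pos_right δ' hS.card_pos)
  · have hsub : closedNbrFinset G b ⊆ nonpendantFinset G := by
      intro w hw
      rw [mem_nonpendantFinset]
      intro hw1
      apply hS
      rcases mem_closedNbrFinset.mp hw with rfl | hadj
      · obtain ⟨u, hu⟩ := (G.degree_pos_iff_exists_adj w).mp (by omega)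
        exact ⟨u, mem_inter.mpr ⟨mem_closedNbrFinset.mpr (.inr hu),
          mem_supportFinset.mpr ⟨w, hu.symm, hw1⟩⟩⟩
      · exact ⟨b, mem_inter.mpr ⟨mem_closedNbrFinset.mpr (.inl rfl),
          mem_supportFinset.mpr ⟨w, hadj, hw1⟩⟩⟩
    have hb := mem_nonpendantFinset.mp (hsub (mem_closedNbrFinset.mpr (.inl rfl)))
    rw [inter_eq_left.mpr hsub, card_closedNbrFinset]
    have := hδ' b hb
    omega

lemma IsPacking.one_add_mul_card_le {B : Finset V} (hB : IsPacking G B) {δ' : ℕ}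
    (hδ' : ∀ v, G.degree v ≠ 1 → δ' ≤ G.degree v)
    (hsupp : supportFinset G ⊆ nonpendantFinset G) :
    (1 + δ') * B.card ≤ (nonpendantFinset G).card + δ' * (supportFinset G).card :=
  calc (1 + δ') * B.card = ∑ _b ∈ B, (1 + δ') := by rw [sum_const, smul_eq_mul, mul_comm]
    _ ≤ ∑ b ∈ B, ((closedNbrFinset G b ∩ nonpendantFinset G).card +
          δ' * (closedNbrFinset G b ∩ supportFinset G).card) :=
      sum_le_sum fun b _ ↦ one_add_le_card_inter_nonpendant_add_mul hδ' hsupp b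
    _ ≤ (nonpendantFinset G).card + δ' * (supportFinset G).card := by
      rw [sum_add_distrib, ← mul_sum]
      gcongr <;> exact hB.sum_card_inter_le _

end Packing

/-- If `G` is connected of order `n ≥ 3` with `ℓ` pendant vertices and `s` support
vertices, and `δ'` is the minimum degree over non-pendant vertices, then
`ρ(G) ≤ (n − ℓ + δ'·s) / (1 + δ')`. -/
theorem packingNumber_le (G : SimpleGraph V) [Fintype V] [DecidableEq V]
    [DecidableRel G.Adj] (hconn : G.Connected) (hn : 3 ≤ Fintype.card V)
    (δ' : ℕ) (hδ' : δ' = sInf {d : ℕ | ∃ v : V, G.degree v ≠ 1 ∧ G.degree v = d}) :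
    (packingNumber G : ℝ) ≤
      ((Fintype.card V : ℝ) - ({v : V | G.degree v = 1}.ncard : ℝ) +
          (δ' : ℝ) * ({v : V | ∃ u : V, G.Adj v u ∧ G.degree u = 1}.ncard : ℝ)) /
        (1 + (δ' : ℝ)) := by
  obtain ⟨B, hB, hcard⟩ := exists_isPacking_card_eq_packingNumber (G := G)
  have hδ : ∀ v, G.degree v ≠ 1 → δ' ≤ G.degree v := fun v hv ↦ by
    rw [hδ']; exact Nat.sInf_le ⟨v, hv, rfl⟩
  have hcount := hB.one_add_mul_card_le hδ (hconn.supportFinset_subset_nonpendantFinset hn)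
  have hpendant : {v : V | G.degree v = 1}.ncard + (nonpendantFinset G).card = Fintype.card V := by
    rw [Set.ncard_eq_toFinset_card', Set.toFinset_ofPred, nonpendantFinset,
      card_filter_add_card_filter_not, card_univ]
  have hsupport :
      {v : V | ∃ u : V, G.Adj v u ∧ G.degree u = 1}.ncard = (supportFinset G).card := by
    rw [Set.ncard_eq_toFinset_card', Set.toFinset_ofPred, supportFinset]
  rw [le_div_iff₀ (by positivity), ← hcard, hsupport, ← hpendant]
  push_cast
  linarith [(by exact_mod_cast hcount : ((1 + δ') * B.card : ℝ) ≤
    (nonpendantFinset G).card + δ' * (supportFinset G).card)]
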